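/- arXiv:1208.0148 — 6 statements merged into one kernel-verified Lean document; each statement's English description precedes it below -/
import Mathlib

section
/- If f is analytic on the unit disk D with f(z) = z + b z^2 + ..., |b| ≤ 1, f'(z) ≠ 0 on D, and Re(z f''(z)/f'(z) + 1) > (|b|-1)/(|b|+1) for all z in D, then Re(√(f'(z))) > 1/2 for all z in D, where the branch of the square root is chosen so that √1 = 1. -/
open Complex ComplexConjugate Metric Set Filter Topology

/-!
Suppose `Re p ≤ 1/2` somewhere and let `z₀` be a point of least modulus with `Re p(z₀) = 1/2`.
Then `w = 1/p - 1` maps the disk `|z| ≤ |z₀|` into the closed unit disk, `w(0) = 0`,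
`w'(0) = -b` and `|w(z₀)| = 1`. The Schwarz lemma with prescribed derivative,
`|w(z)| ≤ ρ (A + ρ)/(1 + A ρ)` with `ρ = |z|/|z₀|` and `A = |z₀| |b|`, bounds the growth of `|w|`
along the radius, while `|w|` is maximal at `z₀` on the circle; together they give
`z₀ w'(z₀) = t w(z₀)` for a real `t ≥ 2/(1 + A)`. Translated back to `f' = p²`, this says
`Re(z₀ f''(z₀)/f'(z₀) + 1) = 1 - t ≤ (A - 1)/(A + 1) ≤ (|b| - 1)/(|b| + 1)`.
-/

theorem norm_sub_le_norm_one_sub_conj_mul {c g : ℂ} (hc : ‖c‖ ≤ 1) (hg : ‖g‖ ≤ 1) :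
    ‖g - c‖ ≤ ‖1 - conj c * g‖ := by
  have key : normSq (1 - conj c * g) = normSq (g - c) + (1 - normSq c) * (1 - normSq g) := by
    simp only [normSq_apply, sub_re, sub_im, mul_re, mul_im, conj_re, conj_im, one_re, one_im]
    ring
  have hc' : normSq c ≤ 1 := by rw [← Complex.sq_norm]; exact pow_le_one₀ (norm_nonneg c) hc
  have hg' : normSq g ≤ 1 := by rw [← Complex.sq_norm]; exact pow_le_one₀ (norm_nonneg g) hg
  rw [← sq_le_sq₀ (norm_nonneg _) (norm_nonneg _), Complex.sq_norm, Complex.sq_norm, key]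
  nlinarith

theorem norm_le_of_norm_sub_le_mul_norm_one_sub_conj_mul {c ζ : ℂ} {t : ℝ} (ht0 : 0 ≤ t)
    (ht1 : t ≤ 1) (hc : ‖c‖ < 1) (h : ‖ζ - c‖ ≤ t * ‖1 - conj c * ζ‖) :
    ‖ζ‖ ≤ (‖c‖ + t) / (1 + ‖c‖ * t) := by
  set a := ‖c‖
  set x := ‖ζ‖
  set s := (conj c * ζ).re
  have ha : 0 ≤ a := norm_nonneg c
  have hs : s ≤ a * x := by
    simpa only [norm_mul, norm_conj] using re_le_norm (conj c * ζ)
  have hsq : x ^ 2 - 2 * s + a ^ 2 ≤ t ^ 2 * (1 - 2 * s + a ^ 2 * x ^ 2) := by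
    have e1 : ‖ζ - c‖ ^ 2 = x ^ 2 - 2 * s + a ^ 2 := by
      simp only [x, a, s, Complex.sq_norm, normSq_apply, sub_re, sub_im, mul_re,
        conj_re, conj_im]
      ring
    have e2 : ‖1 - conj c * ζ‖ ^ 2 = 1 - 2 * s + a ^ 2 * x ^ 2 := by
      simp only [x, a, s, Complex.sq_norm, normSq_apply, sub_re, sub_im, mul_re, mul_im,
        conj_re, conj_im, one_re, one_im]
      ring
    rw [← e1, ← e2, ← mul_pow]
    exact pow_le_pow_left₀ (norm_nonneg _) h 2
  -- `x` lies between the two roots `(a ± t) / (1 ± a t)` of this quadratic.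
  have hquad : ((1 + a * t) * x - (a + t)) * ((1 - a * t) * x - (a - t)) ≤ 0 := by
    nlinarith [mul_nonneg (sub_nonneg.2 ht1) ht0, mul_nonneg ht0 ht0]
  have hat : a * t < 1 := by nlinarith
  rw [le_div_iff₀ (by positivity)]
  by_contra! hx
  have hsecond : 0 < (1 - a * t) * x - (a - t) := by
    have : 0 < (1 + a * t) * ((1 - a * t) * x - (a - t)) := by
      nlinarith [mul_pos (sub_pos.2 hx) (sub_pos.2 hat),
        mul_nonneg ht0 (sub_nonneg.2 (mul_le_one₀ hc.le ha hc.le))]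
    exact pos_of_mul_pos_right this (by positivity)
  nlinarith [mul_pos (sub_pos.2 hx) hsecond]

noncomputable def schwarzBound (A ρ : ℝ) : ℝ := ρ * (A + ρ) / (1 + A * ρ)

theorem schwarzBound_one {A : ℝ} (hA : 0 ≤ A) : schwarzBound A 1 = 1 := by
  unfold schwarzBound
  rw [div_eq_one_iff_eq (by positivity)]
  ring

theorem hasDerivAt_schwarzBound_one {A : ℝ} (hA : 0 ≤ A) :
    HasDerivAt (schwarzBound A) (2 / (1 + A)) 1 := by
  have hnum : HasDerivAt (fun ρ : ℝ => ρ * (A + ρ)) (1 * (A + 1) + 1 * 1) 1 :=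
    (hasDerivAt_id 1).mul ((hasDerivAt_id 1).const_add A)
  have hden : HasDerivAt (fun ρ : ℝ => 1 + A * ρ) (A * 1) 1 :=
    ((hasDerivAt_id 1).const_mul A).const_add 1
  refine (hnum.div hden (by positivity)).congr_deriv ?_
  field_simp
  ring

theorem norm_le_add_div_one_add_mul_of_mapsTo_ball {g : ℂ → ℂ} {R : ℝ}
    (hd : DifferentiableOn ℂ g (ball 0 R)) (hmaps : MapsTo g (ball 0 R) (closedBall 0 1))
    (hg0 : ‖g 0‖ < 1) {z : ℂ} (hz : z ∈ ball 0 R) :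
    ‖g z‖ ≤ (‖g 0‖ + ‖z‖ / R) / (1 + ‖g 0‖ * (‖z‖ / R)) := by
  set c := g 0
  have hR : 0 < R := pos_of_mem_ball hz
  have hg : ∀ y ∈ ball (0 : ℂ) R, ‖g y‖ ≤ 1 := fun y hy => mem_closedBall_zero_iff.1 (hmaps hy)
  have hden : ∀ y ∈ ball (0 : ℂ) R, 1 - conj c * g y ≠ 0 := by
    intro y hy h
    have : ‖conj c * g y‖ < 1 := by
      rw [norm_mul, norm_conj]
      exact mul_lt_one_of_nonneg_of_lt_one_left (norm_nonneg c) hg0 (hg y hy)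
    rw [← sub_eq_zero.1 h, norm_one] at this
    exact lt_irrefl 1 this
  -- The Möbius transform `h` of `g` vanishes at the origin, so the Schwarz lemma applies to it.
  set h : ℂ → ℂ := fun y => (g y - c) / (1 - conj c * g y)
  have hh0 : h 0 = 0 := by simp [h, c]
  have hh : MapsTo h (ball 0 R) (closedBall (h 0) 1) := by
    intro y hy
    rw [hh0, mem_closedBall_zero_iff, norm_div, div_le_one (norm_pos_iff.2 (hden y hy))]
    exact norm_sub_le_norm_one_sub_conj_mul hg0.le (hg y hy)
  have hhd : DifferentiableOn ℂ h (ball 0 R) :=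
    (hd.sub_const c).div ((differentiableOn_const 1).sub (hd.const_mul _)) hden
  have hschwarz : ‖h z‖ ≤ ‖z‖ / R := by
    simpa [hh0, div_eq_inv_mul] using Complex.dist_le_div_mul_dist_of_mapsTo_ball hhd hh hz
  refine norm_le_of_norm_sub_le_mul_norm_one_sub_conj_mul (by positivity)
    ((div_le_one hR).2 (mem_ball_zero_iff.1 hz).le) hg0 ?_
  calc ‖g z - c‖ = ‖h z‖ * ‖1 - conj c * g z‖ := by
        rw [← norm_mul, div_mul_cancel₀ _ (hden z hz)]
    _ ≤ ‖z‖ / R * ‖1 - conj c * g z‖ := by gcongr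

theorem norm_le_schwarzBound {w : ℂ → ℂ} {R : ℝ} (hd : DifferentiableOn ℂ w (ball 0 R))
    (hmaps : MapsTo w (ball 0 R) (closedBall 0 1)) (h0 : w 0 = 0) (hA : R * ‖deriv w 0‖ < 1)
    {z : ℂ} (hz : z ∈ ball 0 R) : ‖w z‖ ≤ schwarzBound (R * ‖deriv w 0‖) (‖z‖ / R) := by
  have hR : 0 < R := pos_of_mem_ball hz
  set g : ℂ → ℂ := fun y => R * dslope w 0 y
  have hgd : DifferentiableOn ℂ g (ball 0 R) :=
    ((Complex.differentiableOn_dslope (ball_mem_nhds 0 hR)).2 hd).const_mul _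
  have hg : MapsTo g (ball 0 R) (closedBall 0 1) := by
    intro y hy
    have := Complex.norm_dslope_le_div_of_mapsTo_ball hd (by rwa [h0]) hy
    rw [mem_closedBall_zero_iff, norm_mul, norm_real, Real.norm_of_nonneg hR.le]
    calc R * ‖dslope w 0 y‖ ≤ R * (1 / R) := by gcongr
      _ = 1 := by field_simp
  have hg0 : ‖g 0‖ = R * ‖deriv w 0‖ := by
    simp [g, dslope_same, norm_real, Real.norm_of_nonneg hR.le]
  have hwg : ‖w z‖ = ‖z‖ / R * ‖g z‖ := by
    have := sub_smul_dslope w 0 z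
    simp only [sub_zero, h0, smul_eq_mul] at this
    rw [← this, norm_mul, norm_mul, norm_real, Real.norm_of_nonneg hR.le]
    field_simp
  have := norm_le_add_div_one_add_mul_of_mapsTo_ball hgd hg (hg0 ▸ hA) hz
  rw [hg0] at this
  rw [hwg, schwarzBound, mul_div_assoc]
  gcongr

theorem HasDerivAt.nonneg_of_forall_Ioo_le {G : ℝ → ℝ} {d a b : ℝ} (hG : HasDerivAt G d b)
    (hab : a < b) (hle : ∀ x ∈ Ioo a b, G x ≤ G b) : 0 ≤ d := by
  have hmax : IsLocalMaxOn G (Ioo a b) b := IsMaxOn.localize hle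
  have hcone : a - b ∈ posTangentConeAt (Ioo a b) b :=
    sub_mem_posTangentConeAt_of_openSegment_subset <| by
      rw [openSegment_symm, openSegment_eq_Ioo hab]
  have := hmax.hasFDerivWithinAt_nonpos hG.hasFDerivAt.hasFDerivWithinAt hcone
  rw [ContinuousLinearMap.toSpanSingleton_apply, smul_eq_mul] at this
  nlinarith

theorem le_re_conj_mul_mul_of_norm_le {w : ℂ → ℂ} {w' z₀ : ℂ} {Ψ : ℝ → ℝ} {Ψ' : ℝ}
    (hw : HasDerivAt w w' z₀) (hΨ : HasDerivAt Ψ Ψ' 1)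
    (hle : ∀ ρ ∈ Ioo (0 : ℝ) 1, ‖w (ρ * z₀)‖ ≤ Ψ ρ) (heq : Ψ 1 = ‖w z₀‖) :
    ‖w z₀‖ * Ψ' ≤ (conj (w z₀) * (w' * z₀)).re := by
  have hray : HasDerivAt (fun ζ : ℂ => conj (w z₀) * w (ζ * z₀)) (conj (w z₀) * (w' * z₀))
      ((1 : ℝ) : ℂ) := by
    refine (hw.comp_of_eq _ ?_ (by simp)).const_mul _
    simpa using (hasDerivAt_id ((1 : ℝ) : ℂ)).mul_const z₀
  have hG := hray.real_of_complex.sub (hΨ.const_mul ‖w z₀‖)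
  refine sub_nonneg.1 (hG.nonneg_of_forall_Ioo_le zero_lt_one fun ρ hρ => ?_)
  have h1 : (conj (w z₀) * w z₀).re = ‖w z₀‖ * ‖w z₀‖ := by
    rw [conj_mul', ← sq]; norm_cast
  have h2 : (conj (w z₀) * w (ρ * z₀)).re ≤ ‖w z₀‖ * ‖w (ρ * z₀)‖ := by
    simpa only [norm_mul, norm_conj] using re_le_norm (conj (w z₀) * w (ρ * z₀))
  have h3 := mul_le_mul_of_nonneg_left (hle ρ hρ) (norm_nonneg (w z₀))
  simp only [Pi.sub_apply, ofReal_one, one_mul, heq, h1]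
  linarith

theorem im_conj_mul_mul_eq_zero_of_isMaxOn_sphere {w : ℂ → ℂ} {w' z₀ : ℂ}
    (hw : HasDerivAt w w' z₀) (hmax : IsMaxOn (‖w ·‖) (sphere 0 ‖z₀‖) z₀) :
    (conj (w z₀) * (w' * z₀)).im = 0 := by
  have hcircle : HasDerivAt (fun ζ : ℂ => conj (w z₀) * w (z₀ * exp (ζ * I)))
      (conj (w z₀) * (w' * z₀) * I) ((0 : ℝ) : ℂ) := by
    rw [mul_assoc, mul_assoc]
    refine (hw.comp_of_eq _ ?_ (by simp)).const_mul _
    simpa using (((hasDerivAt_id ((0 : ℝ) : ℂ)).mul_const I).cexp).const_mul z₀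
  have hlocal : IsLocalMax (fun θ : ℝ => (conj (w z₀) * w (z₀ * exp (θ * I))).re) 0 := by
    refine Eventually.of_forall fun θ => ?_
    have hθ : z₀ * exp (θ * I) ∈ sphere (0 : ℂ) ‖z₀‖ := by simp [norm_exp_ofReal_mul_I]
    have h1 : (conj (w z₀) * w z₀).re = ‖w z₀‖ * ‖w z₀‖ := by
      rw [conj_mul', ← sq]; norm_cast
    have h2 : (conj (w z₀) * w (z₀ * exp (θ * I))).re ≤ ‖w z₀‖ * ‖w (z₀ * exp (θ * I))‖ := by
      simpa only [norm_mul, norm_conj] using re_le_norm (conj (w z₀) * w (z₀ * exp (θ * I)))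
    have h3 := mul_le_mul_of_nonneg_left (hmax hθ) (norm_nonneg (w z₀))
    simp only [ofReal_zero, zero_mul, exp_zero, mul_one, h1]
    exact h2.trans h3
  have h := hlocal.hasDerivAt_eq_zero hcircle.real_of_complex
  rwa [mul_I_re, neg_eq_zero] at h

theorem exists_ge_mul_deriv_eq_ofReal_mul {w : ℂ → ℂ} {w' z₀ : ℂ}
    (hd : DifferentiableOn ℂ w (ball 0 ‖z₀‖))
    (hmaps : MapsTo w (closedBall 0 ‖z₀‖) (closedBall 0 1)) (h0 : w 0 = 0)
    (hA : ‖z₀‖ * ‖deriv w 0‖ < 1) (hw : HasDerivAt w w' z₀) (hz₀ : ‖w z₀‖ = 1) :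
    ∃ t : ℝ, 2 / (1 + ‖z₀‖ * ‖deriv w 0‖) ≤ t ∧ w' * z₀ = t * w z₀ := by
  have hA0 : 0 ≤ ‖z₀‖ * ‖deriv w 0‖ := by positivity
  set A := ‖z₀‖ * ‖deriv w 0‖
  set Λ := conj (w z₀) * (w' * z₀)
  have hz₀0 : z₀ ≠ 0 := by rintro rfl; simp [h0] at hz₀
  have hbound : ∀ ρ ∈ Ioo (0 : ℝ) 1, ‖w (ρ * z₀)‖ ≤ schwarzBound A ρ := by
    intro ρ hρ
    have hnorm : ‖(ρ : ℂ) * z₀‖ = ρ * ‖z₀‖ := by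
      rw [norm_mul, norm_real, Real.norm_of_nonneg hρ.1.le]
    have hmem : (ρ : ℂ) * z₀ ∈ ball 0 ‖z₀‖ := by
      rw [mem_ball_zero_iff, hnorm]
      exact mul_lt_of_lt_one_left (norm_pos_iff.2 hz₀0) hρ.2
    have := norm_le_schwarzBound hd (hmaps.mono_left ball_subset_closedBall) h0 hA hmem
    rwa [hnorm, mul_div_cancel_right₀ _ (norm_ne_zero_iff.2 hz₀0)] at this
  have hradial : 2 / (1 + A) ≤ Λ.re := by
    have := le_re_conj_mul_mul_of_norm_le hw (hasDerivAt_schwarzBound_one hA0) hbound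
      (by rw [schwarzBound_one hA0, hz₀])
    rwa [hz₀, one_mul] at this
  have hangular : Λ.im = 0 :=
    im_conj_mul_mul_eq_zero_of_isMaxOn_sphere hw fun z hz => by
      simpa [hz₀] using hmaps (sphere_subset_closedBall hz)
  refine ⟨Λ.re, hradial, ?_⟩
  have hΛ : (Λ.re : ℂ) = Λ := Complex.ext rfl (by simp [hangular])
  calc w' * z₀ = w z₀ * conj (w z₀) * (w' * z₀) := by
        rw [mul_conj, normSq_eq_norm_sq, hz₀]; simp
    _ = Λ.re * w z₀ := by rw [hΛ]; ring

theorem exists_mem_ball_eq_forall_closedBall_norm_le {E : Type*} [NormedAddCommGroup E]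
    [NormedSpace ℝ E] [ProperSpace E] {u : E → ℝ} {R c : ℝ} {z₁ : E}
    (hu : ContinuousOn u (ball 0 R)) (hu0 : c < u 0) (hz₁ : z₁ ∈ ball 0 R) (h₁ : u z₁ ≤ c) :
    ∃ z₀ ∈ ball (0 : E) R, u z₀ = c ∧ ∀ z ∈ closedBall (0 : E) ‖z₀‖, c ≤ u z := by
  have hsub : closedBall (0 : E) ‖z₁‖ ⊆ ball 0 R :=
    closedBall_subset_ball (mem_ball_zero_iff.1 hz₁)
  set K := closedBall (0 : E) ‖z₁‖ ∩ u ⁻¹' Iic c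
  have hK : IsCompact K := (isCompact_closedBall _ _).of_isClosed_subset
    ((hu.mono hsub).preimage_isClosed_of_isClosed isClosed_closedBall isClosed_Iic)
    inter_subset_left
  obtain ⟨z₀, hz₀K, hmin⟩ := hK.exists_isMinOn ⟨z₁, by simp, h₁⟩ continuous_norm.continuousOn
  have hz₀ : z₀ ∈ ball (0 : E) R := hsub hz₀K.1
  have hlt : ∀ z ∈ ball (0 : E) ‖z₀‖, c < u z := by
    intro z hz
    by_contra! hle
    have hzK : z ∈ K := ⟨mem_closedBall_zero_iff.2 <|
      (mem_ball_zero_iff.1 hz).le.trans (mem_closedBall_zero_iff.1 hz₀K.1), hle⟩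
    exact (mem_ball_zero_iff.1 hz).not_ge (hmin hzK)
  have hz₀0 : ‖z₀‖ ≠ 0 := by
    rintro h
    rw [norm_eq_zero.1 h] at hz₀K
    exact hu0.not_ge hz₀K.2
  have hge : ∀ z ∈ closedBall (0 : E) ‖z₀‖, c ≤ u z := by
    rw [← closure_ball 0 hz₀0]
    refine le_on_closure (fun z hz => (hlt z hz).le) continuousOn_const (hu.mono ?_)
    rw [closure_ball 0 hz₀0]
    exact closedBall_subset_ball (mem_ball_zero_iff.1 hz₀)
  exact ⟨z₀, hz₀, le_antisymm hz₀K.2 (hge z₀ (by simp)), hge⟩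

theorem sq_norm_inv_sub_one_mul_sq_norm {p : ℂ} (hp : p ≠ 0) :
    ‖p⁻¹ - 1‖ ^ 2 * ‖p‖ ^ 2 = ‖p‖ ^ 2 + 1 - 2 * p.re := by
  rw [← mul_pow, ← norm_mul, sub_mul, inv_mul_cancel₀ hp, one_mul, Complex.sq_norm,
    Complex.sq_norm, normSq_sub, normSq_one, one_mul, conj_re]
  ring

theorem norm_inv_sub_one_le_one {p : ℂ} (h : 1 / 2 ≤ p.re) : ‖p⁻¹ - 1‖ ≤ 1 := by
  have hp : p ≠ 0 := by rintro rfl; norm_num at h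
  have key := sq_norm_inv_sub_one_mul_sq_norm hp
  rw [← sq_le_one_iff₀ (norm_nonneg _)]
  refine le_of_mul_le_mul_right ?_ (by positivity : 0 < ‖p‖ ^ 2)
  linarith

theorem norm_inv_sub_one_eq_one {p : ℂ} (h : p.re = 1 / 2) : ‖p⁻¹ - 1‖ = 1 := by
  have hp : p ≠ 0 := by rintro rfl; norm_num at h
  have key := sq_norm_inv_sub_one_mul_sq_norm hp
  rw [← pow_eq_one_iff_of_nonneg (norm_nonneg _) two_ne_zero]
  refine mul_right_cancel₀ (by positivity : ‖p‖ ^ 2 ≠ 0) ?_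
  linarith

theorem re_mul_div_sq_add_one_eq {z p p' : ℂ} {t : ℝ} (hp : p ≠ 0) (hre : p.re = 1 / 2)
    (h : -p' / p ^ 2 * z = t * (p⁻¹ - 1)) : (z * (2 * p * p') / p ^ 2 + 1).re = 1 - t := by
  have : z * (2 * p * p') / p ^ 2 + 1 = 1 - 2 * t * (1 - p) := calc
    _ = -2 * p * (-p' / p ^ 2 * z) + 1 := by field_simp
    _ = 1 - 2 * t * (1 - p) := by rw [h]; field_simp; ring
  rw [this]
  simp [hre]
  ring

theorem one_sub_two_div_one_add_mul_le {r β : ℝ} (hr0 : 0 ≤ r) (hr1 : r ≤ 1) (hβ : 0 ≤ β) :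
    1 - 2 / (1 + r * β) ≤ (β - 1) / (β + 1) := by
  calc 1 - 2 / (1 + r * β) ≤ 1 - 2 / (1 + β) := by
        gcongr
        nlinarith
    _ = (β - 1) / (β + 1) := by field_simp; ring

theorem deriv_eq_two_mul_mul_deriv_of_sq_eq {𝕜 : Type*} [NontriviallyNormedField 𝕜]
    {g p : 𝕜 → 𝕜} {U : Set 𝕜} (hU : IsOpen U) (hp : DifferentiableOn 𝕜 p U)
    (hsq : ∀ y ∈ U, p y ^ 2 = g y) {z : 𝕜} (hz : z ∈ U) :
    deriv g z = 2 * p z * deriv p z := by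
  have h : (fun y => p y ^ 2) =ᶠ[𝓝 z] g := eventually_of_mem (hU.mem_nhds hz) hsq
  rw [← h.deriv_eq, ((hp.differentiableAt (hU.mem_nhds hz)).hasDerivAt.fun_pow 2).deriv]
  ring

theorem stmt_1_general (f p : ℂ → ℂ) (b : ℂ)
    (hfb : deriv (deriv f) 0 = 2 * b)
    (hb : ‖b‖ ≤ 1)
    (hf' : ∀ z ∈ ball (0 : ℂ) 1, deriv f z ≠ 0)
    (hp : AnalyticOn ℂ p (ball 0 1))
    (hp0 : p 0 = 1)
    (hpsq : ∀ z ∈ ball (0 : ℂ) 1, (p z) ^ 2 = deriv f z)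
    (hre : ∀ z ∈ ball (0 : ℂ) 1,
      (z * deriv (deriv f) z / deriv f z + 1).re >
        (‖b‖ - 1) / (‖b‖ + 1)) :
    ∀ z ∈ ball (0 : ℂ) 1, (p z).re > 1 / 2 := by
  intro z₁ hz₁
  by_contra! hbad
  have hpd : ∀ z ∈ ball (0 : ℂ) 1, HasDerivAt p (deriv p z) z := fun z hz =>
    (hp.differentiableOn.differentiableAt (isOpen_ball.mem_nhds hz)).hasDerivAt
  have hpne : ∀ z ∈ ball (0 : ℂ) 1, p z ≠ 0 := fun z hz hpz =>
    hf' z hz (by rw [← hpsq z hz, hpz, zero_pow two_ne_zero])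
  have hf'' : ∀ z ∈ ball (0 : ℂ) 1, deriv (deriv f) z = 2 * p z * deriv p z := fun z hz =>
    deriv_eq_two_mul_mul_deriv_of_sq_eq isOpen_ball hp.differentiableOn hpsq hz
  obtain ⟨z₀, hz₀, hpz₀, hge⟩ :=
    exists_mem_ball_eq_forall_closedBall_norm_le (u := fun z => (p z).re)
      (continuous_re.comp_continuousOn hp.continuousOn) (by simp [hp0]; norm_num) hz₁ hbad
  set w : ℂ → ℂ := fun z => (p z)⁻¹ - 1
  have hw : ∀ z ∈ ball (0 : ℂ) 1, HasDerivAt w (-deriv p z / p z ^ 2) z := fun z hz =>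
    ((hpd z hz).inv (hpne z hz)).sub_const 1
  have hw0 : deriv w 0 = -b := by
    have h0 := hf'' 0 (mem_ball_self one_pos)
    rw [hfb, hp0] at h0
    rw [(hw 0 (mem_ball_self one_pos)).deriv, hp0]
    linear_combination h0 / 2
  have hr₀ : ‖z₀‖ < 1 := mem_ball_zero_iff.1 hz₀
  have hA : ‖z₀‖ * ‖deriv w 0‖ < 1 := by
    rw [hw0, norm_neg]
    exact (mul_le_of_le_one_right (norm_nonneg _) hb).trans_lt hr₀
  obtain ⟨t, ht, hwt⟩ := exists_ge_mul_deriv_eq_ofReal_mul (w := w)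
    (fun z hz => (hw z (ball_subset_ball hr₀.le hz)).differentiableAt.differentiableWithinAt)
    (fun z hz => mem_closedBall_zero_iff.2 (norm_inv_sub_one_le_one (hge z hz)))
    (by simp [w, hp0]) hA (hw z₀ hz₀) (norm_inv_sub_one_eq_one hpz₀)
  have hcontra := hre z₀ hz₀
  rw [hf'' z₀ hz₀, ← hpsq z₀ hz₀, re_mul_div_sq_add_one_eq (hpne z₀ hz₀) hpz₀ hwt] at hcontra
  rw [hw0, norm_neg] at ht
  linarith [one_sub_two_div_one_add_mul_le (norm_nonneg z₀) hr₀.le (norm_nonneg b)]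

/-- If `f(z) = z + b z² + ⋯` is analytic on the unit disk, `|b| ≤ 1`,
`f' ≠ 0` on the disk, and `Re(z f''(z)/f'(z) + 1) > (|b|-1)/(|b|+1)` on the disk,
then `Re √(f'(z)) > 1/2` on the disk, where `√(f')` is the analytic branch `p`
with `p² = f'` and `p(0) = 1`. -/
theorem stmt_1 (f p : ℂ → ℂ) (b : ℂ)
    (hf : AnalyticOn ℂ f (ball 0 1))
    (hf0 : f 0 = 0) (hf1 : deriv f 0 = 1)
    (hfb : deriv (deriv f) 0 = 2 * b)
    (hb : ‖b‖ ≤ 1)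
    (hf' : ∀ z ∈ ball (0 : ℂ) 1, deriv f z ≠ 0)
    (hp : AnalyticOn ℂ p (ball 0 1))
    (hp0 : p 0 = 1)
    (hpsq : ∀ z ∈ ball (0 : ℂ) 1, (p z) ^ 2 = deriv f z)
    (hre : ∀ z ∈ ball (0 : ℂ) 1,
      (z * deriv (deriv f) z / deriv f z + 1).re >
        (‖b‖ - 1) / (‖b‖ + 1)) :
    ∀ z ∈ ball (0 : ℂ) 1, (p z).re > 1 / 2 :=
  stmt_1_general f p b hfb hb hf' hp hp0 hpsq hre
end

section
/- If f is analytic on the unit disk D with f(z) = z + b z^2 + ..., |b| ≤ 1, f(z) ≠ 0 for z ≠ 0, and Re(z f'(z)/f(z)) > |b|/(|b|+1) for all z in D, then Re(f(z)/z) > 1/2 for all z in D. -/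
open Complex Metric

/-!
Write `f z / z = 1 / (1 + w z)`, so that `w 0 = 0`, `w' 0 = -b`, and the claim is `‖w‖ < 1` on
the disk. Otherwise let `z₀` be a point of smallest modulus with `‖w z₀‖ = 1`. Jack's lemma gives
`z₀ w'(z₀) = k w(z₀)` with `k` real, and the boundary Schwarz–Pick estimate for
`ζ ↦ w (ζ z₀) / w z₀` sharpens the classical `k ≥ 1` to `k ≥ 2 / (1 + ‖b‖)`. Because
`‖w z₀‖ = 1`, this forces `Re (z₀ f'(z₀) / f(z₀)) = 1 - k / 2 ≤ ‖b‖ / (1 + ‖b‖)`.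
-/

open Set Filter Topology
open scoped ComplexConjugate

theorem norm_one_sub_conj_mul_sq_sub_norm_sub_sq (a u : ℂ) :
    ‖1 - conj a * u‖ ^ 2 - ‖u - a‖ ^ 2 = (1 - ‖u‖ ^ 2) * (1 - ‖a‖ ^ 2) := by
  simp only [← normSq_eq_norm_sq, normSq_apply, sub_re, sub_im, mul_re, mul_im, conj_re, conj_im,
    one_re, one_im]
  ring

theorem norm_sub_le_norm_one_sub_conj_mul_s2 {a u : ℂ} (ha : ‖a‖ ≤ 1) (hu : ‖u‖ ≤ 1) :
    ‖u - a‖ ≤ ‖1 - conj a * u‖ := by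
  have hid := norm_one_sub_conj_mul_sq_sub_norm_sub_sq a u
  have hnn : 0 ≤ (1 - ‖u‖ ^ 2) * (1 - ‖a‖ ^ 2) := by
    apply mul_nonneg <;> nlinarith [norm_nonneg a, norm_nonneg u]
  exact pow_le_pow_iff_left₀ (norm_nonneg _) (norm_nonneg _) two_ne_zero |>.1 (by linarith)

theorem one_sub_conj_mul_ne_zero {a u : ℂ} (ha : ‖a‖ < 1) (hu : ‖u‖ ≤ 1) :
    1 - conj a * u ≠ 0 := by
  refine sub_ne_zero.2 fun h ↦ ?_
  have : ‖conj a * u‖ < 1 := by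
    rw [norm_mul, RCLike.norm_conj]
    nlinarith [norm_nonneg a, norm_nonneg u]
  simp [← h] at this

theorem norm_le_add_div_of_norm_sub_le_mul {a u : ℂ} {s : ℝ} (hs₀ : 0 ≤ s) (hs₁ : s ≤ 1)
    (ha : ‖a‖ ≤ 1) (hu : ‖u‖ ≤ 1) (h : ‖u - a‖ ≤ s * ‖1 - conj a * u‖) :
    ‖u‖ ≤ (s + ‖a‖) / (1 + ‖a‖ * s) := by
  have hsq : ‖u - a‖ ^ 2 ≤ s ^ 2 * ‖1 - conj a * u‖ ^ 2 := by
    rw [← mul_pow]; exact pow_le_pow_left₀ (norm_nonneg _) h 2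
  have hre : (conj a * u).re ≤ ‖a‖ * ‖u‖ := by
    simpa [norm_mul] using re_le_norm (conj a * u)
  have e1 : ‖u - a‖ ^ 2 = ‖u‖ ^ 2 - 2 * (conj a * u).re + ‖a‖ ^ 2 := by
    simp only [← normSq_eq_norm_sq, normSq_apply, sub_re, sub_im, mul_re, conj_re, conj_im]
    ring
  have e2 : ‖1 - conj a * u‖ ^ 2 = 1 - 2 * (conj a * u).re + ‖a‖ ^ 2 * ‖u‖ ^ 2 := by
    simp only [← normSq_eq_norm_sq, normSq_apply, sub_re, sub_im, mul_re, mul_im, conj_re, conj_im,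
      one_re, one_im]
    ring
  set x := ‖u‖
  set α := ‖a‖
  -- `x` lies between the roots `(α - s) / (1 - α s)` and `(α + s) / (1 + α s)` of a quadratic
  have hquad : (x * (1 + α * s) - (α + s)) * (x * (1 - α * s) - (α - s)) ≤ 0 := by
    nlinarith [mul_le_mul_of_nonneg_left hre (by nlinarith : (0 : ℝ) ≤ 2 * (1 - s ^ 2))]
  have hx : 0 ≤ x := norm_nonneg u
  have hα : 0 ≤ α := norm_nonneg a
  rw [le_div_iff₀ (by positivity)]
  by_contra! hlt
  have : 0 < x * (1 - α * s) - (α - s) := by nlinarith [mul_le_one₀ ha hx hu]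
  nlinarith

/-- Schwarz's lemma composed with the disk automorphism `u ↦ (u - a) / (1 - conj a * u)`. -/
theorem norm_sub_le_mul_norm_one_sub_conj_mul {φ : ℂ → ℂ} (hd : DifferentiableOn ℂ φ (ball 0 1))
    (hmaps : MapsTo φ (ball 0 1) (closedBall 0 1)) (h0 : ‖φ 0‖ < 1) {z : ℂ} (hz : z ∈ ball 0 1) :
    ‖φ z - φ 0‖ ≤ ‖z‖ * ‖1 - conj (φ 0) * φ z‖ := by
  set a := φ 0
  have hφ : ∀ ζ ∈ ball (0 : ℂ) 1, ‖φ ζ‖ ≤ 1 := fun ζ hζ ↦ mem_closedBall_zero_iff.1 (hmaps hζ)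
  have hden : ∀ ζ ∈ ball (0 : ℂ) 1, 1 - conj a * φ ζ ≠ 0 :=
    fun ζ hζ ↦ one_sub_conj_mul_ne_zero h0 (hφ ζ hζ)
  set ψ : ℂ → ℂ := fun ζ ↦ (φ ζ - a) / (1 - conj a * φ ζ)
  have hψd : DifferentiableOn ℂ ψ (ball 0 1) :=
    (hd.sub_const a).div ((differentiableOn_const 1).sub (hd.const_mul _)) hden
  have hψ0 : ψ 0 = 0 := by simp [ψ, a]
  have hψmaps : MapsTo ψ (ball 0 1) (closedBall 0 1) := fun ζ hζ ↦ by
    rw [mem_closedBall_zero_iff, norm_div, div_le_one (norm_pos_iff.2 (hden ζ hζ))]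
    exact norm_sub_le_norm_one_sub_conj_mul_s2 h0.le (hφ ζ hζ)
  have hψz := Complex.norm_le_norm_of_mapsTo_ball hψd hψmaps hψ0 (mem_ball_zero_iff.1 hz)
  rwa [norm_div, div_le_iff₀ (norm_pos_iff.2 (hden z hz))] at hψz

theorem norm_le_add_div_of_mapsTo_ball {φ : ℂ → ℂ} (hd : DifferentiableOn ℂ φ (ball 0 1))
    (hmaps : MapsTo φ (ball 0 1) (closedBall 0 1)) {z : ℂ} (hz : z ∈ ball 0 1) :
    ‖φ z‖ ≤ (‖z‖ + ‖φ 0‖) / (1 + ‖φ 0‖ * ‖z‖) := by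
  have hφ : ∀ ζ ∈ ball (0 : ℂ) 1, ‖φ ζ‖ ≤ 1 := fun ζ hζ ↦ mem_closedBall_zero_iff.1 (hmaps hζ)
  have hz₁ : ‖z‖ < 1 := mem_ball_zero_iff.1 hz
  rcases (hφ 0 (mem_ball_self one_pos)).lt_or_eq with h0 | h0
  · exact norm_le_add_div_of_norm_sub_le_mul (norm_nonneg z) hz₁.le h0.le (hφ z hz)
      (norm_sub_le_mul_norm_one_sub_conj_mul hd hmaps h0 hz)
  · rw [h0, one_mul, add_comm, div_self (by positivity)]
    exact hφ z hz

theorem im_mul_conj_eq_zero_of_norm_le_on_sphere {g : ℂ → ℂ} {g' : ℂ} (hg : HasDerivAt g g' 1)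
    (hmax : ∀ z ∈ sphere (0 : ℂ) 1, ‖g z‖ ≤ ‖g 1‖) : (g' * conj (g 1)).im = 0 := by
  have hexp : HasDerivAt (fun ζ : ℂ ↦ exp (ζ * I)) I 0 := by
    simpa [Function.comp_def] using
      (hasDerivAt_exp (0 * I)).comp (0 : ℂ) ((hasDerivAt_id (0 : ℂ)).mul_const I)
  have hcircle : HasDerivAt (fun θ : ℝ ↦ g (exp (θ * I))) (g' * I) 0 :=
    HasDerivAt.comp_ofReal (z := 0) (by simpa using hg.comp_of_eq (0 : ℂ) hexp (by simp))
  have hmax' : IsLocalMax (fun θ : ℝ ↦ ‖g (exp (θ * I))‖ ^ 2) 0 :=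
    Eventually.of_forall fun θ ↦ by
      simpa using pow_le_pow_left₀ (norm_nonneg _)
        (hmax _ (mem_sphere_zero_iff_norm.2 (norm_exp_ofReal_mul_I θ))) 2
  have := hmax'.hasDerivAt_eq_zero hcircle.norm_sq
  simp only [ofReal_zero, zero_mul, exp_zero, Complex.inner, mul_re, mul_im, I_re, I_im, conj_re,
    conj_im] at this ⊢
  linarith

theorem norm_le_mul_add_div_of_mapsTo_ball {g : ℂ → ℂ} (hd : DifferentiableOn ℂ g (ball 0 1))
    (hmaps : MapsTo g (ball 0 1) (closedBall 0 1)) (h0 : g 0 = 0) {z : ℂ} (hz : z ∈ ball 0 1) :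
    ‖g z‖ ≤ ‖z‖ * ((‖z‖ + ‖deriv g 0‖) / (1 + ‖deriv g 0‖ * ‖z‖)) := by
  have hslope_maps : MapsTo (dslope g 0) (ball 0 1) (closedBall 0 1) := fun z hz ↦ by
    simpa using norm_dslope_le_div_of_mapsTo_ball hd (by rwa [h0]) hz
  have := norm_le_add_div_of_mapsTo_ball
    ((differentiableOn_dslope (ball_mem_nhds 0 one_pos)).2 hd) hslope_maps hz
  rw [dslope_same] at this
  have hgz : g z = z * dslope g 0 z := by simpa [h0] using (sub_smul_dslope g 0 z).symm
  rw [hgz, norm_mul]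
  exact mul_le_mul_of_nonneg_left this (norm_nonneg z)

/-- On `[0, 1)`, `‖g t‖ ≤ t (t + α) / (1 + α t)` with `α = ‖g' 0‖`, and both sides equal `1` at
`t = 1`; comparing left difference quotients of their squares at `1` bounds `Re g' 1`. -/
theorem two_div_le_re_of_mapsTo_ball {g : ℂ → ℂ} {g' : ℂ} (hd : DifferentiableOn ℂ g (ball 0 1))
    (hmaps : MapsTo g (ball 0 1) (closedBall 0 1)) (h0 : g 0 = 0) (h1 : g 1 = 1)
    (hg : HasDerivAt g g' 1) : 2 / (1 + ‖deriv g 0‖) ≤ g'.re := by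
  set α := ‖deriv g 0‖
  have hα : 0 ≤ α := norm_nonneg _
  set u : ℝ → ℝ := fun t ↦ t * ((t + α) / (1 + α * t))
  have hgu : ∀ t ∈ Ioo (0 : ℝ) 1, ‖g t‖ ≤ u t := fun t ht ↦ by
    have htb : (t : ℂ) ∈ ball (0 : ℂ) 1 := by simpa [abs_of_pos ht.1] using ht.2
    simpa [u, abs_of_pos ht.1] using norm_le_mul_add_div_of_mapsTo_ball hd hmaps h0 htb
  set m : ℝ → ℝ := fun t ↦ (1 + u t) * (1 + t) / (1 + α * t)
  have hm : Tendsto m (𝓝[<] 1) (𝓝 (4 / (1 + α))) := by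
    have : ContinuousAt m 1 := by
      simp only [m, u]
      fun_prop (disch := positivity)
    convert this.tendsto.mono_left nhdsWithin_le_nhds using 2
    simp only [m, u]
    field_simp
    ring
  have hψ := (hasDerivWithinAt_iff_tendsto_slope' self_notMem_Iio).1
    (hg.comp_ofReal (z := 1) |>.norm_sq.hasDerivWithinAt (s := Iio 1))
  have hle : m ≤ᶠ[𝓝[<] 1] slope (fun t : ℝ ↦ ‖g t‖ ^ 2) 1 := by
    filter_upwards [Ioo_mem_nhdsLT one_pos] with t ht
    have hu0 : 0 ≤ u t := by have := ht.1; positivity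
    have hsq := pow_le_pow_left₀ (norm_nonneg _) (hgu t ht) 2
    have hmu : u t ^ 2 - 1 = m t * (t - 1) := by
      have : 1 + t * α ≠ 0 := by have := ht.1; positivity
      simp only [m, u]
      field_simp
      ring
    rw [slope_def_field, le_div_iff_of_neg (by linarith [ht.2])]
    simp only [ofReal_one, h1, norm_one, one_pow]
    linarith
  have := le_of_tendsto_of_tendsto hm hψ hle
  simp only [ofReal_one, h1, Complex.inner, map_one, mul_one] at this
  rw [div_le_iff₀ (by positivity)] at this ⊢
  linarith

/-- Jack's lemma, with the bound `k ≥ 1` sharpened by `‖w' 0‖`. -/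
theorem exists_real_mul_deriv_eq_of_norm_eq_one {w : ℂ → ℂ} {z₀ : ℂ}
    (hd : DifferentiableOn ℂ w (ball 0 1)) (hw0 : w 0 = 0) (hz₀ : z₀ ∈ ball (0 : ℂ) 1)
    (hmaps : MapsTo w (closedBall 0 ‖z₀‖) (closedBall 0 1)) (hwz₀ : ‖w z₀‖ = 1) :
    ∃ k : ℝ, z₀ * deriv w z₀ = k * w z₀ ∧ 2 / (1 + ‖deriv w 0‖) ≤ k := by
  have hz₀0 : z₀ ≠ 0 := by rintro rfl; simp [hw0] at hwz₀
  have hwz₀0 : w z₀ ≠ 0 := norm_ne_zero_iff.1 (by rw [hwz₀]; exact one_ne_zero)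
  have hscale : MapsTo (· * z₀) (closedBall (0 : ℂ) 1) (closedBall 0 ‖z₀‖) := fun ζ hζ ↦ by
    rw [mem_closedBall_zero_iff] at hζ ⊢
    rw [norm_mul]
    exact mul_le_of_le_one_left (norm_nonneg _) hζ
  set g : ℂ → ℂ := fun ζ ↦ w (ζ * z₀) / w z₀
  have hg' : ∀ ζ ∈ closedBall (0 : ℂ) 1, HasDerivAt g (deriv w (ζ * z₀) * z₀ / w z₀) ζ :=
    fun ζ hζ ↦ by
      have hw := (hd.differentiableAt (isOpen_ball.mem_nhds
        (closedBall_subset_ball (mem_ball_zero_iff.1 hz₀) (hscale hζ)))).hasDerivAt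
      simpa using (hw.comp ζ ((hasDerivAt_id ζ).mul_const z₀)).div_const (w z₀)
  have hgd : DifferentiableOn ℂ g (ball 0 1) := fun ζ hζ ↦
    (hg' ζ (ball_subset_closedBall hζ)).differentiableAt.differentiableWithinAt
  have hgmaps : MapsTo g (closedBall 0 1) (closedBall 0 1) := fun ζ hζ ↦ by
    simpa [g, norm_div, hwz₀] using hmaps (hscale hζ)
  have hg1 : g 1 = 1 := by simp [g, hwz₀0]
  have hmem1 : (1 : ℂ) ∈ closedBall (0 : ℂ) 1 := by simp
  have him := im_mul_conj_eq_zero_of_norm_le_on_sphere (hg' 1 hmem1) fun z hz ↦ by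
    simpa [hg1] using hgmaps (sphere_subset_closedBall hz)
  have hre := two_div_le_re_of_mapsTo_ball hgd (hgmaps.mono_left ball_subset_closedBall)
    (by simp [g, hw0]) hg1 (hg' 1 hmem1)
  rw [(hg' 0 (by simp)).deriv] at hre
  simp only [hg1, map_one, mul_one, one_mul, zero_mul] at him hre
  refine ⟨(deriv w z₀ * z₀ / w z₀).re, ?_, ?_⟩
  · rw [(Complex.ext (by simp) (by simpa using him.symm) :
      ((deriv w z₀ * z₀ / w z₀).re : ℂ) = deriv w z₀ * z₀ / w z₀)]
    field_simp
  · refine le_trans ?_ hre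
    rw [norm_div, norm_mul, hwz₀, div_one]
    gcongr
    exact mul_le_of_le_one_right (norm_nonneg _) (mem_ball_zero_iff.1 hz₀).le

theorem exists_norm_eq_one_mapsTo_closedBall {E F : Type*} [NormedAddCommGroup E]
    [NormedSpace ℝ E] [ProperSpace E] [NormedAddCommGroup F] [NormedSpace ℝ F] {w : E → F}
    {ρ : ℝ} (hw : ContinuousOn w (ball 0 ρ)) (hw0 : ‖w 0‖ < 1) {z₁ : E} (hz₁ : z₁ ∈ ball 0 ρ)
    (hwz₁ : 1 ≤ ‖w z₁‖) :
    ∃ z₀ ∈ ball (0 : E) ρ, ‖w z₀‖ = 1 ∧ MapsTo w (closedBall 0 ‖z₀‖) (closedBall 0 1) := by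
  have hsub : closedBall (0 : E) ‖z₁‖ ⊆ ball 0 ρ := closedBall_subset_ball (mem_ball_zero_iff.1 hz₁)
  set K := closedBall (0 : E) ‖z₁‖ ∩ w ⁻¹' {y | 1 ≤ ‖y‖}
  have hK : IsCompact K := (isCompact_closedBall 0 ‖z₁‖).of_isClosed_subset
    ((hw.mono hsub).preimage_isClosed_of_isClosed isClosed_closedBall
      (isClosed_le continuous_const continuous_norm)) inter_subset_left
  obtain ⟨z₀, ⟨hz₀, hwz₀⟩, hmin⟩ :=
    hK.exists_isMinOn ⟨z₁, mem_closedBall_zero_iff.2 le_rfl, hwz₁⟩ continuous_norm.continuousOn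
  have hr₀ : ‖z₀‖ ≠ 0 := by
    rintro h
    rw [norm_eq_zero.1 h] at hwz₀
    exact hwz₀.not_gt hw0
  have hball : MapsTo w (ball 0 ‖z₀‖) (ball 0 1) := fun z hz ↦ by
    rw [mem_ball_zero_iff] at hz ⊢
    by_contra! h
    have hz_le : ‖z₀‖ ≤ ‖z‖ :=
      hmin ⟨mem_closedBall_zero_iff.2 (hz.le.trans (mem_closedBall_zero_iff.1 hz₀)), h⟩
    exact hz_le.not_gt hz
  have hclosed : MapsTo w (closedBall 0 ‖z₀‖) (closedBall 0 1) := by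
    rw [← closure_ball _ hr₀, ← closure_ball _ one_ne_zero]
    refine hball.closure_of_continuousOn (hw.mono ?_)
    rw [closure_ball _ hr₀]
    exact (closedBall_subset_closedBall (mem_closedBall_zero_iff.1 hz₀)).trans hsub
  refine ⟨z₀, hsub hz₀, le_antisymm ?_ hwz₀, hclosed⟩
  exact mem_closedBall_zero_iff.1 (hclosed (mem_closedBall_zero_iff.2 le_rfl))

theorem norm_inv_sub_one_sq_sub_one {p : ℂ} (hp : p ≠ 0) :
    ‖p⁻¹ - 1‖ ^ 2 - 1 = (1 - 2 * p.re) / ‖p‖ ^ 2 := by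
  rw [show p⁻¹ - 1 = (1 - p) / p by field_simp, norm_div, div_pow,
    div_sub_one (by simpa using hp)]
  congr 1
  simp only [← normSq_eq_norm_sq, normSq_apply, sub_re, sub_im, one_re, one_im]
  ring

theorem one_half_lt_re_of_norm_inv_sub_one_lt_one {p : ℂ} (h : ‖p⁻¹ - 1‖ < 1) : 1 / 2 < p.re := by
  have hp : p ≠ 0 := by rintro rfl; simp at h
  have hneg : (1 - 2 * p.re) / ‖p‖ ^ 2 < 0 := by
    rw [← norm_inv_sub_one_sq_sub_one hp]
    nlinarith [norm_nonneg (p⁻¹ - 1)]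
  have := (div_neg_iff.1 hneg).resolve_left fun h ↦ (h.2.trans_le (by positivity)).false
  linarith [this.1]

theorem re_eq_half_of_norm_inv_sub_one_eq_one {p : ℂ} (hp : p ≠ 0) (h : ‖p⁻¹ - 1‖ = 1) :
    p.re = 1 / 2 := by
  have := norm_inv_sub_one_sq_sub_one hp
  rw [h, one_pow, sub_self, eq_comm, div_eq_zero_iff] at this
  rcases this with h | h
  · linarith
  · simp [hp] at h

theorem AnalyticAt.analyticAt_dslope {𝕜 E : Type*} [NontriviallyNormedField 𝕜] [NormedAddCommGroup E]
    [NormedSpace 𝕜 E] {f : 𝕜 → E} {a : 𝕜} (hf : AnalyticAt 𝕜 f a) : AnalyticAt 𝕜 (dslope f a) a :=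
  let ⟨_, hp⟩ := hf
  ⟨_, hp.has_fpower_series_dslope_fslope⟩

theorem AnalyticAt.deriv_deriv_eq_two_smul_deriv_dslope {𝕜 E : Type*} [NontriviallyNormedField 𝕜]
    [NormedAddCommGroup E] [NormedSpace 𝕜 E] [CompleteSpace E] {f : 𝕜 → E} {a : 𝕜}
    (hf : AnalyticAt 𝕜 f a) : deriv (deriv f) a = (2 : 𝕜) • deriv (dslope f a) a := by
  set p := dslope f a
  have hp : AnalyticAt 𝕜 p a := hf.analyticAt_dslope
  have hf_eq : f = fun z ↦ f a + (z - a) • p z := funext fun z ↦ by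
    rw [sub_smul_dslope, add_sub_cancel]
  have hderiv : deriv f =ᶠ[𝓝 a] fun z ↦ (z - a) • deriv p z + p z := by
    filter_upwards [hp.eventually_analyticAt] with z hz
    rw [hf_eq]
    simpa using (((hasDerivAt_id z).sub_const a).smul hz.differentiableAt.hasDerivAt).const_add
      (f a) |>.deriv
  rw [hderiv.deriv_eq]
  have h2 : HasDerivAt (fun z ↦ (z - a) • deriv p z + p z)
      ((a - a) • deriv (deriv p) a + (1 : 𝕜) • deriv p a + deriv p a) a :=
    (((hasDerivAt_id a).sub_const a).smul hp.deriv.differentiableAt.hasDerivAt).add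
      hp.differentiableAt.hasDerivAt
  rw [h2.deriv, sub_self, zero_smul, zero_add, one_smul, two_smul]

theorem dslope_zero_of_ne {f : ℂ → ℂ} (hf0 : f 0 = 0) {z : ℂ} (hz : z ≠ 0) :
    dslope f 0 z = f z / z := by
  simp [dslope_of_ne _ hz, slope_def_field, hf0]

/-- When `f 0 = 0`, this is the `w` with `f z / z = 1 / (1 + w z)`. -/
noncomputable def invDslopeSubOne (f : ℂ → ℂ) (z : ℂ) : ℂ := (dslope f 0 z)⁻¹ - 1

theorem invDslopeSubOne_zero {f : ℂ → ℂ} (hf1 : deriv f 0 = 1) : invDslopeSubOne f 0 = 0 := by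
  simp [invDslopeSubOne, hf1]

theorem deriv_invDslopeSubOne_zero {f : ℂ → ℂ} (hf : AnalyticAt ℂ f 0) (hf1 : deriv f 0 = 1) :
    deriv (invDslopeSubOne f) 0 = -deriv (deriv f) 0 / 2 := by
  have hinv : HasDerivAt (invDslopeSubOne f) (-deriv (dslope f 0) 0 / dslope f 0 0 ^ 2) 0 :=
    (hf.analyticAt_dslope.differentiableAt.hasDerivAt.inv (by simp [hf1])).sub_const 1
  rw [hinv.deriv, hf.deriv_deriv_eq_two_smul_deriv_dslope, dslope_same, hf1, smul_eq_mul]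
  ring

theorem differentiableOn_invDslopeSubOne {f : ℂ → ℂ} {s : Set ℂ} (hs : IsOpen s) (h0 : (0 : ℂ) ∈ s)
    (hf : DifferentiableOn ℂ f s) (hf0 : f 0 = 0) (hf1 : deriv f 0 ≠ 0)
    (hfz : ∀ z ∈ s, z ≠ 0 → f z ≠ 0) : DifferentiableOn ℂ (invDslopeSubOne f) s := by
  refine (((differentiableOn_dslope (hs.mem_nhds h0)).2 hf).inv fun z hz ↦ ?_).sub_const 1
  rcases eq_or_ne z 0 with rfl | hz0
  · simpa using hf1
  · rw [dslope_zero_of_ne hf0 hz0]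
    exact div_ne_zero (hfz z hz hz0) hz0

theorem mul_deriv_invDslopeSubOne {f : ℂ → ℂ} (hf0 : f 0 = 0) {z : ℂ} (hz : z ≠ 0)
    (hfd : DifferentiableAt ℂ f z) (hfz : f z ≠ 0) :
    z * deriv (invDslopeSubOne f) z = (dslope f 0 z)⁻¹ * (1 - z * deriv f z / f z) := by
  have heq : invDslopeSubOne f =ᶠ[𝓝 z] fun ζ ↦ ζ / f ζ - 1 := by
    filter_upwards [isOpen_ne.mem_nhds hz] with ζ hζ
    rw [invDslopeSubOne, dslope_zero_of_ne hf0 hζ, inv_div]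
  have hderiv : HasDerivAt (fun ζ ↦ ζ / f ζ - 1) ((1 * f z - z * deriv f z) / f z ^ 2) z :=
    ((hasDerivAt_id z).div hfd.hasDerivAt hfz).sub_const 1
  rw [heq.deriv_eq, dslope_zero_of_ne hf0 hz, hderiv.deriv]
  field_simp

theorem re_mul_deriv_div_eq_one_sub_half {f : ℂ → ℂ} (hf0 : f 0 = 0) {z : ℂ} (hz : z ≠ 0)
    (hfd : DifferentiableAt ℂ f z) (hfz : f z ≠ 0) (hw : ‖invDslopeSubOne f z‖ = 1) {k : ℝ}
    (hk : z * deriv (invDslopeSubOne f) z = k * invDslopeSubOne f z) :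
    (z * deriv f z / f z).re = 1 - k / 2 := by
  have hp : dslope f 0 z ≠ 0 := by rw [dslope_zero_of_ne hf0 hz]; exact div_ne_zero hfz hz
  have hq : 1 - z * deriv f z / f z = k * (1 - dslope f 0 z) := by
    have := mul_deriv_invDslopeSubOne hf0 hz hfd hfz
    rw [hk, invDslopeSubOne] at this
    field_simp at this ⊢
    linear_combination -this
  have hq_re := congrArg re hq
  simp only [sub_re, one_re, re_ofReal_mul, re_eq_half_of_norm_inv_sub_one_eq_one hp hw] at hq_re
  linarith

theorem stmt_2_general (f : ℂ → ℂ) (b : ℂ)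
    (hf : AnalyticOn ℂ f (ball 0 1))
    (hf0 : f 0 = 0) (hf1 : deriv f 0 = 1)
    (hfb : deriv (deriv f) 0 = 2 * b)
    (hfz : ∀ z ∈ ball (0 : ℂ) 1, z ≠ 0 → f z ≠ 0)
    (hre : ∀ z ∈ ball (0 : ℂ) 1, z ≠ 0 →
      (z * deriv f z / f z).re > ‖b‖ / (‖b‖ + 1)) :
    ∀ z ∈ ball (0 : ℂ) 1, z ≠ 0 → (f z / z).re > 1 / 2 := by
  set w := invDslopeSubOne f
  have hfd := hf.differentiableOn
  have hwd : DifferentiableOn ℂ w (ball 0 1) := differentiableOn_invDslopeSubOne isOpen_ball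
    (mem_ball_self one_pos) hfd hf0 (by simp [hf1]) hfz
  have hw0 : w 0 = 0 := invDslopeSubOne_zero hf1
  suffices hw : ∀ z ∈ ball (0 : ℂ) 1, ‖w z‖ < 1 by
    intro z hz hz0
    rw [← dslope_zero_of_ne hf0 hz0]
    exact one_half_lt_re_of_norm_inv_sub_one_lt_one (hw z hz)
  by_contra! ⟨z₁, hz₁, hwz₁⟩
  obtain ⟨z₀, hz₀, hwz₀, hmaps⟩ :=
    exists_norm_eq_one_mapsTo_closedBall hwd.continuousOn (by simp [hw0]) hz₁ hwz₁
  obtain ⟨k, hk, hk_ge⟩ := exists_real_mul_deriv_eq_of_norm_eq_one hwd hw0 hz₀ hmaps hwz₀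
  rw [deriv_invDslopeSubOne_zero (hf.analyticAt (isOpen_ball.mem_nhds (mem_ball_self one_pos)))
    hf1, hfb, show -(2 * b) / 2 = -b by ring, norm_neg, div_le_iff₀ (by positivity)] at hk_ge
  have hz₀0 : z₀ ≠ 0 := by rintro rfl; simp [hw0] at hwz₀
  have hlt := hre z₀ hz₀ hz₀0
  rw [re_mul_deriv_div_eq_one_sub_half hf0 hz₀0 (hfd.differentiableAt (isOpen_ball.mem_nhds hz₀))
    (hfz z₀ hz₀ hz₀0) hwz₀ hk, gt_iff_lt, div_lt_iff₀ (by positivity)] at hlt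
  linarith

/-- If `f(z) = z + b z² + ⋯` is analytic on the unit disk, `|b| ≤ 1`,
`f(z) ≠ 0` for `z ≠ 0`, and `Re(z f'(z)/f(z)) > |b|/(|b|+1)` on the disk,
then `Re(f(z)/z) > 1/2` on the disk. -/
theorem stmt_2 (f : ℂ → ℂ) (b : ℂ)
    (hf : AnalyticOn ℂ f (ball 0 1))
    (hf0 : f 0 = 0) (hf1 : deriv f 0 = 1)
    (hfb : deriv (deriv f) 0 = 2 * b)
    (hb : ‖b‖ ≤ 1)
    (hfz : ∀ z ∈ ball (0 : ℂ) 1, z ≠ 0 → f z ≠ 0)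
    (hre : ∀ z ∈ ball (0 : ℂ) 1, z ≠ 0 →
      (z * deriv f z / f z).re > ‖b‖ / (‖b‖ + 1)) :
    ∀ z ∈ ball (0 : ℂ) 1, z ≠ 0 → (f z / z).re > 1 / 2 :=
  stmt_2_general f b hf hf0 hf1 hfb hfz hre
end

section
/- Let b ∈ ℝ with 0 ≤ b ≤ 1, and let ρ, σ be real numbers with σ ≤ −(1/(1+b))(1+ρ²). Set ζ = (1 + σ + iρ)/2 = ξ + iη. Then ξ + √(ξ² + η²) ≤ (1+b)/4, and consequently Re(√ζ) ≤ √((1+b)/8), where √ζ denotes the principal square root. -/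
open Complex

/-! With `c = (1+b)/4`, the bound `ξ + √(ξ²+η²) ≤ c` amounts to `η² + 2cξ ≤ c²`. The hypothesis on `σ`
gives `2(1+b)ξ ≤ b − 4η²`, i.e. `η² + 2cξ ≤ b/4`, and `b/4 ≤ c²` is `(1−b)² ≥ 0`. The bound on the
square root then follows from `(Re √ζ)² = (Re ζ + |ζ|)/2`. -/

lemma one_add_mul_one_add_le_sub_sq {b ρ σ : ℝ} (hb : 0 < 1 + b)
    (hσ : σ ≤ -(1 / (1 + b)) * (1 + ρ ^ 2)) : (1 + b) * (1 + σ) ≤ b - ρ ^ 2 := by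
  have h : σ * (1 + b) ≤ -(1 + ρ ^ 2) := by
    rw [← le_div_iff₀ hb]
    exact hσ.trans_eq (by ring)
  linarith

lemma add_sqrt_sq_add_sq_le {ξ η c : ℝ} (hc : 0 < c) (h : η ^ 2 + 2 * c * ξ ≤ c ^ 2) :
    ξ + √(ξ ^ 2 + η ^ 2) ≤ c := by
  have hξ : ξ ≤ c := by nlinarith [sq_nonneg η]
  have : √(ξ ^ 2 + η ^ 2) ≤ c - ξ := Real.sqrt_le_iff.mpr ⟨by linarith, by nlinarith⟩
  linarith

lemma Complex.re_cpow_half_le_sqrt {z : ℂ} {c : ℝ} (h : z.re + ‖z‖ ≤ c) :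
    (z ^ (1 / 2 : ℂ)).re ≤ √(c / 2) := by
  rw [one_div, cpow_inv_two_re]
  exact Real.sqrt_le_sqrt (by linarith)

theorem stmt_12_general (b ρ σ : ℝ) (hb0 : 0 ≤ b)
    (hσ : σ ≤ -(1 / (1 + b)) * (1 + ρ ^ 2))
    (ξ η : ℝ) (hξ : ξ = (1 + σ) / 2) (hη : η = ρ / 2)
    (ζ : ℂ) (hζ : ζ = (1 + (σ : ℂ) + Complex.I * (ρ : ℂ)) / 2) :
    ξ + Real.sqrt (ξ ^ 2 + η ^ 2) ≤ (1 + b) / 4 ∧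
      (ζ ^ ((1 / 2 : ℂ))).re ≤ Real.sqrt ((1 + b) / 8) := by
  have hb : 0 < 1 + b := by linarith
  have hparabola := one_add_mul_one_add_le_sub_sq hb hσ
  have hbound : ξ + √(ξ ^ 2 + η ^ 2) ≤ (1 + b) / 4 := by
    refine add_sqrt_sq_add_sq_le (by linarith) ?_
    subst hξ hη
    nlinarith [sq_nonneg (1 - b)]
  have hre : ζ.re = ξ := by simp [hζ, hξ]
  have him : ζ.im = η := by simp [hζ, hη]
  have hnorm : ‖ζ‖ = √(ξ ^ 2 + η ^ 2) := by
    rw [Complex.norm_eq_sqrt_sq_add_sq, hre, him]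
  refine ⟨hbound, ?_⟩
  convert Complex.re_cpow_half_le_sqrt (c := (1 + b) / 4) (by rwa [hre, hnorm]) using 2
  ring

/-- Parabola admissibility: if `σ ≤ −(1/(1+b))(1+ρ²)` and
`ζ = (1+σ+iρ)/2 = ξ+iη`, then `ξ + √(ξ²+η²) ≤ (1+b)/4` and
`Re √ζ ≤ √((1+b)/8)` for the principal square root. -/
theorem stmt_12 (b ρ σ : ℝ) (hb0 : 0 ≤ b) (hb1 : b ≤ 1)
    (hσ : σ ≤ -(1 / (1 + b)) * (1 + ρ ^ 2))
    (ξ η : ℝ) (hξ : ξ = (1 + σ) / 2) (hη : η = ρ / 2)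
    (ζ : ℂ) (hζ : ζ = (1 + (σ : ℂ) + Complex.I * (ρ : ℂ)) / 2) :
    ξ + Real.sqrt (ξ ^ 2 + η ^ 2) ≤ (1 + b) / 4 ∧
      (ζ ^ ((1 / 2 : ℂ))).re ≤ Real.sqrt ((1 + b) / 8) :=
  stmt_12_general b ρ σ hb0 hσ ξ η hξ hη ζ hζ
end

section
/- Let α ∈ [5/8, 2/3], let b be real with 4(|b|+4)α² − 3(|b|+6)α + 5 = 0 and 0 ≤ |b| ≤ 1/2, and let m ≥ 1 + ((2α−1)/α − |b|)/((2α−1)/α + |b|). Define q(ζ) = α(1−ζ)/((α−1)ζ + α). Then for every ζ on the unit circle with ζ ≠ 1, Re( q(ζ) + m ζ q'(ζ)/q(ζ) ) ≥ 3/2. -/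
/-! With `D = (α - 1) ζ + α`, partial fractions give
`q + m ζ q' / q = α / (1 - α) * (1 - (2α - 1) / D) + m (α / D - 1 / (1 - ζ))`.
On the unit circle `Re (1 / (1 - ζ)) = 1 / 2`, and `D` lies on the circle `|D - α| = 1 - α`,
which inversion maps to a circle whose real parts fill `[1, 1 / (2α - 1)]`. The real part of
the expression is affine in `t = Re (1 / D)`, so it suffices to check the two endpoints. The
relation between `α` and `b` turns the bound on `m` into `m (2α - 1) ≥ 3 - 4α`, which is exactly
the condition at `t = 1`; at `t = 1 / (2α - 1)` one needs `m ≥ 3 (2α - 1)`, which holds since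
`m ≥ 1` and `α ≤ 2/3`. -/

open Complex

theorem hasDerivAt_div_linear {𝕜 : Type*} [NontriviallyNormedField 𝕜] {a b c d z : 𝕜}
    (h : c * z + d ≠ 0) :
    HasDerivAt (fun w => (a * w + b) / (c * w + d)) ((a * d - b * c) / (c * z + d) ^ 2) z :=
  ((((hasDerivAt_id' z).const_mul a).add_const b).div
    (((hasDerivAt_id' z).const_mul c).add_const d) h).congr_deriv (by ring)

namespace Complex

theorem re_inv_one_sub_of_norm_eq_one {ζ : ℂ} (hζ : ‖ζ‖ = 1) (hζ1 : ζ ≠ 1) :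
    (1 - ζ)⁻¹.re = 1 / 2 := by
  have hnormSq : ζ.re * ζ.re + ζ.im * ζ.im = 1 := by
    rw [← normSq_apply, ← Complex.sq_norm, hζ, one_pow]
  have hre : ζ.re ≠ 1 := fun h => hζ1 (ext h (by simpa [h] using hnormSq))
  have hpos : 0 < 1 - ζ.re := sub_pos.2 (lt_of_le_of_ne (by nlinarith) hre)
  rw [inv_re, normSq_apply]
  simp only [sub_re, one_re, sub_im, one_im]
  rw [div_eq_iff (by nlinarith)]
  linear_combination -hnormSq / 2

theorem re_inv_mem_Icc_of_norm_sub_le {w : ℂ} {c r : ℝ} (hrc : r < c) (hw : ‖w - c‖ ≤ r) :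
    w⁻¹.re ∈ Set.Icc (1 / (c + r)) (1 / (c - r)) := by
  have hre : |w.re - c| ≤ r := by simpa using (abs_re_le_norm (w - c)).trans hw
  have hsq : (w.re - c) * (w.re - c) + w.im * w.im ≤ r ^ 2 := by
    simpa [Complex.sq_norm, normSq_apply] using pow_le_pow_left₀ (norm_nonneg _) hw 2
  obtain ⟨hre_lo, hre_hi⟩ := abs_le.1 hre
  have hpos : 0 < normSq w := by rw [normSq_apply]; nlinarith
  rw [inv_re, normSq_apply] at *
  constructor
  · rw [div_le_div_iff₀ (by linarith) hpos]; nlinarith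
  · rw [div_le_div_iff₀ hpos (by linarith)]; nlinarith

end Complex

section

variable {α : ℝ}

theorem one_add_div_eq_of_quadratic {β : ℝ} (hα : 1 / 2 < α) (hβ : 0 ≤ β)
    (h : 4 * (β + 4) * α ^ 2 - 3 * (β + 6) * α + 5 = 0) :
    1 + ((2 * α - 1) / α - β) / ((2 * α - 1) / α + β) = (3 - 4 * α) / (2 * α - 1) := by
  have : 0 < 2 * α - 1 := by linarith
  have : 0 < 2 * α - 1 + α * β := by positivity
  field_simp
  linear_combination h

theorem three_halves_le_affine_of_mem_Icc {m t : ℝ} (hα : 1 / 2 < α) (hα' : α ≤ 2 / 3)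
    (hm : 3 - 4 * α ≤ m * (2 * α - 1)) (ht : t ∈ Set.Icc 1 (1 / (2 * α - 1))) :
    3 / 2 ≤ α / (1 - α) * (1 - (2 * α - 1) * t) + m * (α * t - 1 / 2) := by
  obtain ⟨ht1, ht2⟩ := ht
  have h2α : 0 < 2 * α - 1 := by linarith
  have h1α : 0 < 1 - α := by linarith
  rw [le_div_iff₀ h2α, mul_comm] at ht2
  have hm1 : 1 ≤ m := by nlinarith
  have hinterp : α / (1 - α) * (1 - (2 * α - 1) * t) + m * (α * t - 1 / 2) - 3 / 2
      = ((1 - (2 * α - 1) * t) * (m * (2 * α - 1) - (3 - 4 * α))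
        + (t - 1) * (m - 3 * (2 * α - 1))) / (4 * (1 - α)) := by
    field_simp
    ring
  have : 0 ≤ ((1 - (2 * α - 1) * t) * (m * (2 * α - 1) - (3 - 4 * α))
      + (t - 1) * (m - 3 * (2 * α - 1))) / (4 * (1 - α)) :=
    div_nonneg (add_nonneg (mul_nonneg (by linarith) (by linarith))
      (mul_nonneg (by linarith) (by linarith))) (by linarith)
  linarith

variable {ζ : ℂ}

theorem norm_denom_sub_eq_one_sub (hα : α ≤ 1) (hζ : ‖ζ‖ = 1) :
    ‖((α : ℂ) - 1) * ζ + α - α‖ = 1 - α := by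
  rw [add_sub_cancel_right, norm_mul, hζ, mul_one, ← ofReal_one, ← ofReal_sub, norm_real,
    Real.norm_of_nonpos (by linarith), neg_sub]

theorem mobius_add_mul_logDeriv_eq (m : ℝ) (hα0 : α ≠ 0) (hα1 : α ≠ 1) (hζ1 : ζ ≠ 1)
    (hD : ((α : ℂ) - 1) * ζ + α ≠ 0) :
    α * (1 - ζ) / ((α - 1) * ζ + α)
        + m * ζ * (α * (1 - 2 * α) / ((α - 1) * ζ + α) ^ 2) / (α * (1 - ζ) / ((α - 1) * ζ + α))
      = ((α / (1 - α) : ℝ) : ℂ) * (1 - ((2 * α - 1 : ℝ) : ℂ) * ((α - 1) * ζ + α)⁻¹)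
        + m * (α * ((α - 1) * ζ + α)⁻¹ - (1 - ζ)⁻¹) := by
  have : (α : ℂ) ≠ 0 := ofReal_ne_zero.2 hα0
  have : (1 : ℂ) - α ≠ 0 := sub_ne_zero.2 (by exact_mod_cast hα1.symm)
  have : (1 : ℂ) - ζ ≠ 0 := sub_ne_zero.2 hζ1.symm
  simp only [ofReal_div, ofReal_sub, ofReal_one, ofReal_mul, ofReal_ofNat]
  -- `field_simp` cannot see through the expanded denominator, so name it first
  generalize hw : ((α : ℂ) - 1) * ζ + α = w at *
  field_simp
  rw [← hw]
  ring

end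

theorem stmt_15_general (α b m : ℝ)
    (hα : α ∈ Set.Icc (5 / 8 : ℝ) (2 / 3))
    (heq : 4 * (|b| + 4) * α ^ 2 - 3 * (|b| + 6) * α + 5 = 0)
    (hm : m ≥ 1 + ((2 * α - 1) / α - |b|) / ((2 * α - 1) / α + |b|))
    (q : ℂ → ℂ)
    (hq : ∀ ζ : ℂ, q ζ = (α : ℂ) * (1 - ζ) / (((α : ℂ) - 1) * ζ + (α : ℂ))) :
    ∀ ζ : ℂ, ‖ζ‖ = 1 → ζ ≠ 1 →
      (q ζ + (m : ℂ) * ζ * deriv q ζ / q ζ).re ≥ 3 / 2 := by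
  intro ζ hζ hζ1
  obtain ⟨hα1, hα2⟩ := hα
  have h2α : 0 < 2 * α - 1 := by linarith
  rw [one_add_div_eq_of_quadratic (by linarith) (abs_nonneg b) heq, ge_iff_le,
    div_le_iff₀ h2α] at hm
  have hnorm := norm_denom_sub_eq_one_sub (α := α) (by linarith) hζ
  have hD : ((α : ℂ) - 1) * ζ + α ≠ 0 := fun h0 => by
    rw [h0, zero_sub, norm_neg, norm_real, Real.norm_of_nonneg (by linarith)] at hnorm
    linarith
  have ht := re_inv_mem_Icc_of_norm_sub_le (by linarith) hnorm.le
  rw [show α + (1 - α) = 1 by ring, show α - (1 - α) = 2 * α - 1 by ring, div_one] at ht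
  have hderiv : deriv q ζ = α * (1 - 2 * α) / ((α - 1) * ζ + α) ^ 2 := by
    have hq_eq : q = fun w : ℂ => (-α * w + α) / ((α - 1) * w + α) :=
      funext fun w => by rw [hq]; ring
    rw [hq_eq, (hasDerivAt_div_linear hD).deriv]
    ring
  rw [hderiv, hq, mobius_add_mul_logDeriv_eq m (by linarith) (by linarith) hζ1 hD]
  simp only [add_re, sub_re, re_ofReal_mul, one_re, re_inv_one_sub_of_norm_eq_one hζ hζ1]
  exact three_halves_le_affine_of_mem_Icc (by linarith) hα2 hm ht

/-- Boundary admissibility estimate for the Möbius map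
`q(ζ) = α(1−ζ)/((α−1)ζ+α)`: under the stated conditions on `α`, `b`, `m`,
for all `ζ` on the unit circle with `ζ ≠ 1`,
`Re(q(ζ) + m ζ q'(ζ)/q(ζ)) ≥ 3/2`. -/
theorem stmt_15 (α b m : ℝ)
    (hα : α ∈ Set.Icc (5 / 8 : ℝ) (2 / 3))
    (hb : |b| ≤ 1 / 2)
    (heq : 4 * (|b| + 4) * α ^ 2 - 3 * (|b| + 6) * α + 5 = 0)
    (hm : m ≥ 1 + ((2 * α - 1) / α - |b|) / ((2 * α - 1) / α + |b|))
    (q : ℂ → ℂ)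
    (hq : ∀ ζ : ℂ, q ζ = (α : ℂ) * (1 - ζ) / (((α : ℂ) - 1) * ζ + (α : ℂ))) :
    ∀ ζ : ℂ, ‖ζ‖ = 1 → ζ ≠ 1 →
      (q ζ + (m : ℂ) * ζ * deriv q ζ / q ζ).re ≥ 3 / 2 :=
  stmt_15_general α b m hα heq hm q hq
end

section
/- Let α ∈ [5/8, 2/3] and m ≥ 1 be real. Then for every ζ ∈ ℂ with |ζ| = 1, Re( ((m+2)α − ζ) / ((α−1)ζ + α) ) ≥ (2(m+2)α² − mα − 1)/(2α − 1). -/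
/-!
Writing `c = (m + 2)α + 1`, which is the right-hand side and the value of the quotient at
`ζ = -1`, one has
`((m + 2)α - ζ) / ((α - 1)ζ + α) = c + α (m + 1 - (m + 2)α) · (1 + ζ) / ((α - 1)ζ + α)`.
The factor `α (m + 1 - (m + 2)α)` is nonnegative because `α ≤ 2/3 ≤ (m + 1)/(m + 2)`, and on the
unit circle `Re((1 + ζ) / (βζ + γ))` has the sign of `(β + γ)(1 + Re ζ)`, here with
`β + γ = 2α - 1 > 0`.
-/

namespace Complex

lemma mul_add_ofReal_ne_zero {β γ : ℝ} (h : |β| ≠ |γ|) {ζ : ℂ} (hζ : ‖ζ‖ = 1) :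
    (β : ℂ) * ζ + γ ≠ 0 := by
  intro h0
  apply h
  simpa [hζ] using congrArg norm (eq_neg_of_add_eq_zero_left h0)

lemma re_one_add_div_mul_add_ofReal_nonneg {β γ : ℝ} (h : 0 ≤ β + γ) {ζ : ℂ} (hζ : ‖ζ‖ = 1) :
    0 ≤ ((1 + ζ) / ((β : ℂ) * ζ + γ)).re := by
  have hsq : ζ.re * ζ.re + ζ.im * ζ.im = 1 := by
    rw [← normSq_apply, normSq_eq_norm_sq, hζ, one_pow]
  have hre : -1 ≤ ζ.re := by nlinarith [mul_self_nonneg ζ.im, mul_self_nonneg (ζ.re + 1)]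
  have hnum : (1 + ζ.re) * (β * ζ.re + γ) + ζ.im * (β * ζ.im) = (β + γ) * (1 + ζ.re) := by
    linear_combination β * hsq
  rw [div_re]
  simp only [add_re, add_im, one_re, one_im, mul_re, mul_im, ofReal_re, ofReal_im, zero_mul,
    sub_zero, add_zero, zero_add]
  rw [← add_div, hnum]
  exact div_nonneg (mul_nonneg h (by linarith)) (normSq_nonneg _)

end Complex

/-- Möbius estimate: for `α ∈ [5/8, 2/3]`, `m ≥ 1`, and `|ζ| = 1`,
`Re(((m+2)α − ζ)/((α−1)ζ + α)) ≥ (2(m+2)α² − mα − 1)/(2α − 1)`. -/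
theorem stmt_17 (α m : ℝ) (hα : α ∈ Set.Icc (5 / 8 : ℝ) (2 / 3)) (hm : 1 ≤ m)
    (ζ : ℂ) (hζ : ‖ζ‖ = 1) :
    ((((m : ℂ) + 2) * (α : ℂ) - ζ) / (((α : ℂ) - 1) * ζ + (α : ℂ))).re ≥
      (2 * (m + 2) * α ^ 2 - m * α - 1) / (2 * α - 1) := by
  obtain ⟨hα₁, hα₂⟩ := hα
  have hden : ((α : ℂ) - 1) * ζ + α ≠ 0 := by
    have h := Complex.mul_add_ofReal_ne_zero (β := α - 1) (γ := α)
      (by rw [abs_of_neg (by linarith), abs_of_pos (by linarith)]; linarith) hζ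
    simpa using h
  have hrhs : (2 * (m + 2) * α ^ 2 - m * α - 1) / (2 * α - 1) = (m + 2) * α + 1 := by
    rw [div_eq_iff (by linarith)]; ring
  have hsplit : (((m : ℂ) + 2) * α - ζ) / ((α - 1) * ζ + α) =
      (((m + 2) * α + 1 : ℝ) : ℂ) +
        ((α * (m + 1 - (m + 2) * α) : ℝ) : ℂ) * ((1 + ζ) / (((α - 1 : ℝ) : ℂ) * ζ + α)) := by
    push_cast
    rw [← mul_div_assoc, add_div' _ _ _ hden, div_left_inj' hden]
    ring
  have hcoef : 0 ≤ α * (m + 1 - (m + 2) * α) := mul_nonneg (by linarith) (by nlinarith)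
  rw [hrhs, hsplit, Complex.add_re, Complex.ofReal_re, Complex.re_ofReal_mul, ge_iff_le,
    le_add_iff_nonneg_right]
  exact mul_nonneg hcoef (Complex.re_one_add_div_mul_add_ofReal_nonneg (by linarith) hζ)
end

section
/- Let b ∈ ℝ with 0 ≤ b ≤ 1/2 and let α ∈ [1/2, 2/3] satisfy 2α³ + 2(1−b)α² − (2b+7)α + 3 + b = 0. Let ρ, σ be real with σ ≤ −(1/2)(2 + (2(1−α) − 2b)/(2(1−α) + 2b)) · ((1−α)² + ρ²)/(1−α). Then α + ασ/(α² + ρ²) ≤ −1/2. -/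
/-!
Write `c = 1 - α`. By the defining cubic the coefficient of `((1 - α)² + ρ²) / (1 - α)` in the
bound on `σ` is exactly `-α (α + 1/2) / c`. Since `α ≥ 1/2` we have `c ≤ α`, so
`t ↦ (c² + t) / (α² + t)` is nondecreasing on `t ≥ 0`, and at `t = ρ²` it is at least `c² / α²`.
Hence `α σ / (α² + ρ²) ≤ -(α + 1/2)`.
-/

theorem div_le_add_div_add {K : Type*} [Field K] [LinearOrder K] [IsStrictOrderedRing K]
    {p q t : K} (hq : 0 < q) (hpq : p ≤ q) (ht : 0 ≤ t) : p / q ≤ (p + t) / (q + t) := by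
  rw [div_le_div_iff₀ hq (by linarith)]
  nlinarith

theorem add_mul_div_le_of_le_neg_mul {α c K ρ σ : ℝ} (hα : 0 < α) (hc : 0 < c) (hcα : c ≤ α)
    (hK : 0 ≤ K) (hσ : σ ≤ -K * ((c ^ 2 + ρ ^ 2) / c)) :
    α + α * σ / (α ^ 2 + ρ ^ 2) ≤ α - K * c / α := by
  have hratio : c ^ 2 / α ^ 2 ≤ (c ^ 2 + ρ ^ 2) / (α ^ 2 + ρ ^ 2) :=
    div_le_add_div_add (by positivity) (pow_le_pow_left₀ hc.le hcα 2) (sq_nonneg ρ)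
  have hD : 0 < α ^ 2 + ρ ^ 2 := by positivity
  calc α + α * σ / (α ^ 2 + ρ ^ 2)
      ≤ α + α * (-K * ((c ^ 2 + ρ ^ 2) / c)) / (α ^ 2 + ρ ^ 2) := by gcongr
    _ = α - α * K / c * ((c ^ 2 + ρ ^ 2) / (α ^ 2 + ρ ^ 2)) := by ring
    _ ≤ α - α * K / c * (c ^ 2 / α ^ 2) := by gcongr
    _ = α - K * c / α := by field_simp

theorem coeff_eq_of_cubic {α b : ℝ} (hc : 1 - α ≠ 0) (hcb : 1 - α + b ≠ 0)
    (hroot : 2 * α ^ 3 + 2 * (1 - b) * α ^ 2 - (2 * b + 7) * α + 3 + b = 0) :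
    -(1 / 2) * (2 + (2 * (1 - α) - 2 * b) / (2 * (1 - α) + 2 * b)) =
      -(α * (α + 1 / 2) / (1 - α)) := by
  field_simp
  linear_combination -hroot

theorem stmt_18_general (b α ρ σ : ℝ) (hb0 : 0 ≤ b)
    (hα : α ∈ Set.Icc (1 / 2 : ℝ) (2 / 3))
    (hroot : 2 * α ^ 3 + 2 * (1 - b) * α ^ 2 - (2 * b + 7) * α + 3 + b = 0)
    (hσ : σ ≤ -(1 / 2) * (2 + (2 * (1 - α) - 2 * b) / (2 * (1 - α) + 2 * b)) *
      (((1 - α) ^ 2 + ρ ^ 2) / (1 - α))) :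
    α + α * σ / (α ^ 2 + ρ ^ 2) ≤ -(1 / 2) := by
  obtain ⟨hα1, hα2⟩ := hα
  have hα0 : 0 < α := by linarith
  have hc : 0 < 1 - α := by linarith
  rw [coeff_eq_of_cubic hc.ne' (by linarith : 0 < 1 - α + b).ne' hroot] at hσ
  refine (add_mul_div_le_of_le_neg_mul hα0 hc (by linarith) (by positivity) hσ).trans_eq ?_
  field_simp
  ring

/-- Admissibility verification for Theorem 3.3: if `0 ≤ b ≤ 1/2`,
`α ∈ [1/2, 2/3]` satisfies `2α³ + 2(1−b)α² − (2b+7)α + 3 + b = 0`, and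
`σ ≤ −(1/2)(2 + (2(1−α) − 2b)/(2(1−α) + 2b))((1−α)² + ρ²)/(1−α)`, then
`α + ασ/(α² + ρ²) ≤ −1/2`. -/
theorem stmt_18 (b α ρ σ : ℝ) (hb0 : 0 ≤ b) (hb1 : b ≤ 1 / 2)
    (hα : α ∈ Set.Icc (1 / 2 : ℝ) (2 / 3))
    (hroot : 2 * α ^ 3 + 2 * (1 - b) * α ^ 2 - (2 * b + 7) * α + 3 + b = 0)
    (hσ : σ ≤ -(1 / 2) * (2 + (2 * (1 - α) - 2 * b) / (2 * (1 - α) + 2 * b)) *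
      (((1 - α) ^ 2 + ρ ^ 2) / (1 - α))) :
    α + α * σ / (α ^ 2 + ρ ^ 2) ≤ -(1 / 2) :=
  stmt_18_general b α ρ σ hb0 hα hroot hσ
end
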